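/- For t = 2, the fundamental group π_1(Q, I) of the standard presentation of the squid algebra S(2,p,τ) is isomorphic to ℤ. -/

import Mathlib

/-!
Squid algebras and their first Hochschild cohomology.

The squid algebra `S(t,p,τ)` is `kQ/I` for the squid quiver `Q`; we encode it
via its universal property: an algebra equipped with a complete family of
orthogonal idempotents indexed by the vertices of the squid quiver, elements
corresponding to the arrows, satisfying the squid relations, and universal
among such algebras.

`HH^1` is encoded via derivations modulo inner derivations.
-/

open scoped BigOperators

/-- The vertices of the squid quiver: the source `0`, the center `c`,
and the branch vertices `(i,j)` for `1 ≤ i ≤ t`, `1 ≤ j ≤ p i`. -/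
def SquidVertex (t : ℕ) (p : Fin t → ℕ) : Type :=
  Unit ⊕ (Unit ⊕ (Σ i : Fin t, Fin (p i)))

instance (t : ℕ) (p : Fin t → ℕ) : Fintype (SquidVertex t p) := by
  unfold SquidVertex; infer_instance

instance (t : ℕ) (p : Fin t → ℕ) : DecidableEq (SquidVertex t p) := by
  unfold SquidVertex; infer_instance

/-- The source vertex `0`. -/
def SquidVertex.src {t : ℕ} {p : Fin t → ℕ} : SquidVertex t p := Sum.inl ()

/-- The central vertex `c`. -/
def SquidVertex.ctr {t : ℕ} {p : Fin t → ℕ} : SquidVertex t p := Sum.inr (Sum.inl ())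

/-- The branch vertex `(i,j)`. -/
def SquidVertex.br {t : ℕ} {p : Fin t → ℕ} (i : Fin t) (j : Fin (p i)) : SquidVertex t p :=
  Sum.inr (Sum.inr ⟨i, j⟩)

/-- The arrows of the squid quiver: `a₁, a₂ : 0 → c` (a `Fin 2` of arrows),
`bᵢ : c → (i,1)`, and the branch arrows `(i,j) → (i,j+1)`. -/
def SquidArrow (t : ℕ) (p : Fin t → ℕ) :
    SquidVertex t p → SquidVertex t p → Type
  | Sum.inl _, Sum.inr (Sum.inl _) => Fin 2
  | Sum.inr (Sum.inl _), Sum.inr (Sum.inr ⟨_, j⟩) => PLift (j.val = 0)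
  | Sum.inr (Sum.inr ⟨i, j⟩), Sum.inr (Sum.inr ⟨i', j'⟩) =>
      PLift (∃ _ : i = i', j'.val = j.val + 1)
  | _, _ => Empty

/-- The squid quiver. -/
instance squidQuiver (t : ℕ) (p : Fin t → ℕ) : Quiver (SquidVertex t p) :=
  ⟨SquidArrow t p⟩
open CategoryTheory Quiver

/-- The two-sided "ideal closure" (inside the linearised path category) of a family `R`
of relations: the `k`-span of all translates `u · r · v` of relations `r ∈ R` by paths. -/
def relIdeal (k : Type) [Field k] {V : Type} [Quiver.{0} V]
    (R : Set (Σ x y : V, (Quiver.Path x y →₀ k))) (x y : V) :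
    Set (Quiver.Path x y →₀ k) :=
  (Submodule.span k { w : Quiver.Path x y →₀ k |
    ∃ (a b : V) (u : Quiver.Path x a) (r : Quiver.Path a b →₀ k) (v : Quiver.Path b y),
      (⟨a, b, r⟩ : Σ x y : V, (Quiver.Path x y →₀ k)) ∈ R ∧
      w = Finsupp.mapDomain (fun q => (u.comp q).comp v) r } : Set _)

/-- A minimal relation of a system `I` of linear combinations of parallel paths:
a nonzero element of `I x y` no proper nonempty "subsum" of which lies in `I x y`
(Martínez-Villa–de la Peña). -/
def IsMinimalRelation (k : Type) [Field k] {V : Type} [Quiver.{0} V]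
    (I : ∀ x y : V, Set (Quiver.Path x y →₀ k)) {x y : V}
    (r : Quiver.Path x y →₀ k) : Prop :=
  r ∈ I x y ∧ r ≠ 0 ∧
    ∀ r₁ r₂ : Quiver.Path x y →₀ k, r = r₁ + r₂ →
      Disjoint r₁.support r₂.support → r₁ ≠ 0 → r₂ ≠ 0 → r₁ ∉ I x y

/-- The morphism of the free groupoid on `V` associated to a path in `V`. -/
def homOfPath {V : Type} [Quiver.{0} V] :
    ∀ {x y : V}, Quiver.Path x y →
      ((Quiver.FreeGroupoid.of V).obj x ⟶ (Quiver.FreeGroupoid.of V).obj y)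
  | _, _, Quiver.Path.nil => 𝟙 _
  | _, _, Quiver.Path.cons q f => homOfPath q ≫ (Quiver.FreeGroupoid.of V).map f

/-- The normal subgroup of homotopy relations: the normal closure, in the fundamental
group of the underlying graph of `V` at `x₀` (the vertex group of the free groupoid),
of the elements `w ≫ u ≫ v⁻¹ ≫ w⁻¹` for `u, v` two parallel paths appearing in a common
minimal relation of `I`. -/
def homotopyRelations (k : Type) [Field k] {V : Type} [Quiver.{0} V]
    (I : ∀ x y : V, Set (Quiver.Path x y →₀ k)) (x₀ : V) :
    Subgroup ((Quiver.FreeGroupoid.of V).obj x₀ ⟶ (Quiver.FreeGroupoid.of V).obj x₀) :=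
  Subgroup.normalClosure
    { g | ∃ (x y : V) (r : Quiver.Path x y →₀ k), IsMinimalRelation k I r ∧
        ∃ u ∈ r.support, ∃ v ∈ r.support,
          ∃ w : (Quiver.FreeGroupoid.of V).obj x₀ ⟶ (Quiver.FreeGroupoid.of V).obj x,
            g = w ≫ homOfPath u ≫ Groupoid.inv (homOfPath v) ≫ Groupoid.inv w }

/-- The fundamental group `π₁(Q, I)` of a bound quiver, at the base vertex `x₀`. -/
def piOne (k : Type) [Field k] {V : Type} [Quiver.{0} V]
    (I : ∀ x y : V, Set (Quiver.Path x y →₀ k)) (x₀ : V) : Type :=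
  ((Quiver.FreeGroupoid.of V).obj x₀ ⟶ (Quiver.FreeGroupoid.of V).obj x₀) ⧸ homotopyRelations k I x₀

noncomputable instance (k : Type) [Field k] {V : Type} [Quiver.{0} V]
    (I : ∀ x y : V, Set (Quiver.Path x y →₀ k)) (x₀ : V) : Group (piOne k I x₀) :=
  letI : (homotopyRelations k I x₀).Normal := Subgroup.normalClosure_normal
  QuotientGroup.Quotient.group _
/-- The arrow `aₘ : 0 → c` (`m = 0,1`) of the squid quiver. -/
def squidArrA {t : ℕ} {p : Fin t → ℕ} (m : Fin 2) :
    (SquidVertex.src : SquidVertex t p) ⟶ SquidVertex.ctr :=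
  (m : SquidArrow t p SquidVertex.src SquidVertex.ctr)

/-- The arrow `bᵢ : c → (i,1)` of the squid quiver. -/
def squidArrB {t : ℕ} {p : Fin t → ℕ} (i : Fin t) (h : 0 < p i) :
    (SquidVertex.ctr : SquidVertex t p) ⟶ SquidVertex.br i ⟨0, h⟩ :=
  (PLift.up rfl : SquidArrow t p SquidVertex.ctr (SquidVertex.br i ⟨0, h⟩))

/-- The path `bᵢ ∘ aₘ : 0 → (i,1)` in the squid quiver. -/
def squidPathBA {t : ℕ} {p : Fin t → ℕ} (i : Fin t) (h : 0 < p i) (m : Fin 2) :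
    Quiver.Path (SquidVertex.src : SquidVertex t p) (SquidVertex.br i ⟨0, h⟩) :=
  (Quiver.Path.nil.cons (squidArrA m)).cons (squidArrB i h)

/-- The generating relations of the squid algebra, as linear combinations of
parallel paths: `b₁a₁`, `b₂a₂`, and `bᵢa₂ - τᵢ·(bᵢa₁)` for `2 ≤ i` (0-based). -/
def squidRelations (k : Type) [Field k] (t : ℕ) (p : Fin t → ℕ) (τ : Fin t → k) :
    Set (Σ x y : SquidVertex t p, (Quiver.Path x y →₀ k)) :=
  { s | ∃ (i : Fin t) (h : 0 < p i),
      (i.val = 0 ∧ s = ⟨SquidVertex.src, SquidVertex.br i ⟨0, h⟩,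
          Finsupp.single (squidPathBA i h 0) 1⟩) ∨
      (i.val = 1 ∧ s = ⟨SquidVertex.src, SquidVertex.br i ⟨0, h⟩,
          Finsupp.single (squidPathBA i h 1) 1⟩) ∨
      (2 ≤ i.val ∧ s = ⟨SquidVertex.src, SquidVertex.br i ⟨0, h⟩,
          Finsupp.single (squidPathBA i h 1) 1 - τ i • Finsupp.single (squidPathBA i h 0) 1⟩) }

/-!
The relations `b₁a₁` and `b₂a₂` are paths, so the ideal they generate is spanned by paths and every
minimal relation is a multiple of a single path. There are thus no homotopy relations, and
`π₁(Q, I)` is the fundamental group of the underlying graph of `Q`. That graph is the tree formed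
by `a₁`, the `bᵢ` and the tails, plus the one extra edge `a₂`. Counting the signed passages through
`a₂` gives a functor from the free groupoid to `ℤ`; conjugating every arrow into the base point
along the tree shows that each loop `f` equals `(a₂ a₁⁻¹) ^ n` with `n` the winding number of `f`.
-/

theorem Finsupp.single_mem_span_of_mem_support {α R : Type*} [Semiring R]
    {S : Set (α →₀ R)} (hS : ∀ s ∈ S, ∃ q, s = Finsupp.single q 1) {w : α →₀ R}
    (hw : w ∈ Submodule.span R S) {u : α} (hu : u ∈ w.support) (c : R) :
    Finsupp.single u c ∈ Submodule.span R S := by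
  have hS' : S = (fun q => Finsupp.single q (1 : R)) '' {q | Finsupp.single q 1 ∈ S} := by
    ext s
    refine ⟨fun hs => ?_, fun ⟨q, hq, hqs⟩ => hqs ▸ hq⟩
    obtain ⟨q, rfl⟩ := hS s hs
    exact ⟨q, hs, rfl⟩
  rw [hS', ← Finsupp.supported_eq_span_single] at hw ⊢
  exact Finsupp.single_mem_supported R c ((Finsupp.mem_supported R w).1 hw hu)

section HomotopyRelations

variable {k : Type} [Field k] {V : Type} [Quiver.{0} V]

instance (I : ∀ x y : V, Set (Path x y →₀ k)) (x₀ : V) : (homotopyRelations k I x₀).Normal :=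
  Subgroup.normalClosure_normal

theorem single_mem_relIdeal {R : Set (Σ x y : V, (Path x y →₀ k))}
    (hR : ∀ (a b : V) (r : Path a b →₀ k), ⟨a, b, r⟩ ∈ R → ∃ q, r = Finsupp.single q 1)
    {x y : V} {r : Path x y →₀ k} (hr : r ∈ relIdeal k R x y) {u : Path x y}
    (hu : u ∈ r.support) (c : k) : Finsupp.single u c ∈ relIdeal k R x y := by
  refine Finsupp.single_mem_span_of_mem_support ?_ hr hu c
  rintro _ ⟨a, b, v, r, w, hmem, rfl⟩
  obtain ⟨q, rfl⟩ := hR a b r hmem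
  exact ⟨_, Finsupp.mapDomain_single⟩

theorem IsMinimalRelation.support_subsingleton {I : ∀ x y : V, Set (Path x y →₀ k)} {x y : V}
    (hI : ∀ r ∈ I x y, ∀ u ∈ r.support, Finsupp.single u (r u) ∈ I x y)
    {r : Path x y →₀ k} (hr : IsMinimalRelation k I r) :
    (r.support : Set (Path x y)).Subsingleton := by
  classical
  obtain ⟨hrI, -, hsplit⟩ := hr
  intro u hu v hv
  by_contra huv
  have hv' : v ∈ (r.erase u).support := by
    rw [Finsupp.support_erase]
    exact Finset.mem_erase.2 ⟨Ne.symm huv, hv⟩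
  refine hsplit _ _ (Finsupp.single_add_erase u r).symm ?_ ?_ ?_ (hI r hrI u hu)
  · rw [Finsupp.support_erase]
    exact Finset.disjoint_of_subset_left Finsupp.support_single_subset
      (Finset.disjoint_singleton_left.2 (Finset.notMem_erase u _))
  · exact Finsupp.single_ne_zero.2 (Finsupp.mem_support_iff.1 hu)
  · rintro h
    simp [h] at hv'

theorem homotopyRelations_eq_bot {I : ∀ x y : V, Set (Path x y →₀ k)} (x₀ : V)
    (hI : ∀ (x y : V) (r : Path x y →₀ k), IsMinimalRelation k I r →
      (r.support : Set (Path x y)).Subsingleton) :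
    homotopyRelations k I x₀ = ⊥ := by
  refine le_bot_iff.1 (Subgroup.normalClosure_le_normal ?_)
  rintro _ ⟨x, y, r, hr, u, hu, v, hv, w, rfl⟩
  obtain rfl : u = v := hI x y r hr hu hv
  simp

theorem homotopyRelations_relIdeal_eq_bot {R : Set (Σ x y : V, (Path x y →₀ k))}
    (hR : ∀ (a b : V) (r : Path a b →₀ k), ⟨a, b, r⟩ ∈ R → ∃ q, r = Finsupp.single q 1)
    (x₀ : V) : homotopyRelations k (relIdeal k R) x₀ = ⊥ :=
  homotopyRelations_eq_bot x₀ fun _ _ _ hr =>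
    hr.support_subsingleton fun _ hr' _ hu => single_mem_relIdeal hR hr' hu _

end HomotopyRelations

theorem comp_comp_inv_eq_id_of_eq {C : Type*} [Category C] {X Y Z : C} {f : X ⟶ Y} {g : Y ⟶ Z}
    {h : X ⟶ Z} [IsIso h] (hfg : h = f ≫ g) : f ≫ g ≫ inv h = 𝟙 X := by
  rw [← Category.assoc, comp_inv_eq_id, hfg]

namespace Quiver.FreeGroupoid

variable {V : Type*} [Quiver V]

def winding (w : Labelling V (Multiplicative ℤ)) :
    Quiver.FreeGroupoid V ⥤ SingleObj (Multiplicative ℤ) :=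
  lift { obj := fun _ => SingleObj.star _, map := fun a => w a }

theorem winding_map_of (w : Labelling V (Multiplicative ℤ)) {x y : V} (a : x ⟶ y) :
    (winding w).map ((of V).map a) = w a := by
  change (of V ⋙q (winding w).toPrefunctor).map a = _
  rw [winding, lift_spec]

def windingHom (w : Labelling V (Multiplicative ℤ)) (x₀ : V) :
    ((of V).obj x₀ ⟶ (of V).obj x₀) →* Multiplicative ℤ where
  toFun f := (winding w).map f
  map_one' := (winding w).map_id _
  -- composition in `SingleObj` is multiplication in the opposite order
  map_mul' f g := ((winding w).map_comp f g).trans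
    (mul_comm (G := Multiplicative ℤ) ((winding w).map g) _)

variable {w : Labelling V (Multiplicative ℤ)} {x₀ : V}
  (η : ∀ X : Quiver.FreeGroupoid V, (of V).obj x₀ ⟶ X) (g : (of V).obj x₀ ⟶ (of V).obj x₀)

theorem zpow_windingHom (hη : η ((of V).obj x₀) = 𝟙 _)
    (h : ∀ ⦃x y : V⦄ (a : x ⟶ y), η _ ≫ (of V).map a ≫ inv (η ((of V).obj y)) = g ^ (w a).toAdd)
    (f : (of V).obj x₀ ⟶ (of V).obj x₀) : g ^ (windingHom w x₀ f).toAdd = f := by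
  let conj : Quiver.FreeGroupoid V ⥤ Quiver.FreeGroupoid V :=
    { obj _ := (of V).obj x₀
      map {X Y} f := η X ≫ f ≫ inv (η Y)
      map_id _ := by simp
      map_comp _ _ := by simp }
  let powers : SingleObj (Multiplicative ℤ) ⥤ Quiver.FreeGroupoid V :=
    { obj _ := (of V).obj x₀
      map n := g ^ n.toAdd
      map_id _ := zpow_zero g
      map_comp m n := by
        rw [SingleObj.comp_as_mul, toAdd_mul, add_comm, zpow_add]
        rfl }
  have hconj : winding w ⋙ powers = conj := by
    rw [lift_unique _ conj rfl]
    refine lift_unique _ _ (Prefunctor.ext (fun _ => rfl) fun x y a => ?_)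
    change g ^ ((winding w).map ((of V).map a)).toAdd = η _ ≫ (of V).map a ≫ inv (η _)
    rw [winding_map_of, ← h a]
  have hf := Functor.congr_hom hconj f
  simp only [conj, hη, Functor.comp_map, eqToHom_refl, Category.id_comp, Category.comp_id,
    IsIso.inv_id] at hf
  exact hf

noncomputable def vertexGroupEquivInt (hη : η ((of V).obj x₀) = 𝟙 _)
    (h : ∀ ⦃x y : V⦄ (a : x ⟶ y), η _ ≫ (of V).map a ≫ inv (η ((of V).obj y)) = g ^ (w a).toAdd)
    (hg : windingHom w x₀ g = .ofAdd 1) :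
    ((of V).obj x₀ ⟶ (of V).obj x₀) ≃* Multiplicative ℤ :=
  { windingHom w x₀ with
    invFun n := g ^ n.toAdd
    left_inv := zpow_windingHom η g hη h
    right_inv n := by simp [hg, ← ofAdd_zsmul] }

end Quiver.FreeGroupoid

section Squid

open Quiver.FreeGroupoid

variable {t : ℕ} {p : Fin t → ℕ}

def squidWinding : Labelling (SquidVertex t p) (Multiplicative ℤ) := fun x y =>
  match x, y with
  | Sum.inl _, Sum.inr (Sum.inl _) => fun m : Fin 2 => .ofAdd ((m : ℕ) : ℤ)
  | _, _ => fun _ => 1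

noncomputable def squidBranchHom (i : Fin t) : ∀ (j : ℕ) (h : j < p i),
    (of (SquidVertex t p)).obj .src ⟶ (of _).obj (.br i ⟨j, h⟩)
  | 0, h => (of _).map (squidArrA 0) ≫ (of _).map (squidArrB i h)
  | j + 1, h => squidBranchHom i j (Nat.lt_of_succ_lt h) ≫
      (of _).map (show (SquidVertex.br i ⟨j, _⟩ : SquidVertex t p) ⟶ .br i ⟨j + 1, h⟩ from
        PLift.up ⟨rfl, rfl⟩)

noncomputable def squidTreeHom :
    ∀ X : Quiver.FreeGroupoid (SquidVertex t p), (of (SquidVertex t p)).obj .src ⟶ X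
  | ⟨Sum.inl ()⟩ => 𝟙 _
  | ⟨Sum.inr (Sum.inl ())⟩ => (of _).map (squidArrA 0)
  | ⟨Sum.inr (Sum.inr ⟨i, j⟩)⟩ => squidBranchHom i j j.isLt

noncomputable def squidLoop : (of (SquidVertex t p)).obj .src ⟶ (of _).obj .src :=
  (of _).map (squidArrA 1) ≫ inv ((of _).map (squidArrA 0))

theorem squidTreeHom_conj ⦃x y : SquidVertex t p⦄ (a : x ⟶ y) :
    squidTreeHom _ ≫ (of _).map a ≫ inv (squidTreeHom ((of _).obj y)) =
      squidLoop ^ (squidWinding a).toAdd := by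
  rcases x with ⟨⟨⟩⟩ | ⟨⟨⟩⟩ | ⟨i, j⟩ <;> rcases y with ⟨⟨⟩⟩ | ⟨⟨⟩⟩ | ⟨i', j', hj'⟩ <;>
    try exact (a : Empty).elim
  · rcases (a : Fin 2) with ⟨_ | _ | m, hm⟩
    · exact comp_comp_inv_eq_id_of_eq (Category.id_comp _).symm
    · exact (Category.id_comp _).trans (zpow_one _).symm
    · omega
  -- on tree arrows `squidTreeHom` of the target is, by definition, that of the source then `a`
  · obtain rfl : j' = 0 := (a : PLift (j' = 0)).down
    exact comp_comp_inv_eq_id_of_eq rfl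
  · obtain ⟨rfl, rfl⟩ := (a : PLift (∃ _ : i = i', j' = j.val + 1)).down
    exact comp_comp_inv_eq_id_of_eq rfl

theorem windingHom_squidLoop :
    windingHom squidWinding .src (squidLoop (t := t) (p := p)) = .ofAdd 1 := by
  change (winding _).map (_ ≫ inv _) = _
  rw [Functor.map_comp, Functor.map_inv, SingleObj.inv_as_inv, winding_map_of, winding_map_of,
    SingleObj.comp_as_mul]
  rfl

noncomputable def squidVertexGroupEquivInt (t : ℕ) (p : Fin t → ℕ) :
    ((of (SquidVertex t p)).obj .src ⟶ (of _).obj .src) ≃* Multiplicative ℤ :=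
  vertexGroupEquivInt squidTreeHom squidLoop rfl squidTreeHom_conj windingHom_squidLoop

theorem squidRelations_two_eq_single {k : Type} [Field k] {p : Fin 2 → ℕ} {τ : Fin 2 → k}
    (a b : SquidVertex 2 p) (r : Path a b →₀ k) (hr : ⟨a, b, r⟩ ∈ squidRelations k 2 p τ) :
    ∃ q, r = Finsupp.single q 1 := by
  obtain ⟨i, h, ⟨-, ⟨⟩⟩ | ⟨-, ⟨⟩⟩ | ⟨hi, -⟩⟩ := hr
  · exact ⟨_, rfl⟩
  · exact ⟨_, rfl⟩
  · omega

end Squid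

theorem squid_t_eq_two_pi_one_infinite_cyclic_general (k : Type) [Field k]
    (p : Fin 2 → ℕ) (τ : Fin 2 → k) :
    Nonempty (piOne k (relIdeal k (squidRelations k 2 p τ)) SquidVertex.src ≃*
      Multiplicative ℤ) := by
  have hbot := homotopyRelations_relIdeal_eq_bot
    (squidRelations_two_eq_single (p := p) (τ := τ)) SquidVertex.src
  exact ⟨(QuotientGroup.quotientMulEquivOfEq hbot).trans QuotientGroup.quotientBot
    |>.trans (squidVertexGroupEquivInt 2 p)⟩

/-- For `t = 2`, the fundamental group `π₁(Q, I)` of the standard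
presentation of the squid algebra `S(2,p,τ)` is isomorphic to `ℤ`. -/
theorem squid_t_eq_two_pi_one_infinite_cyclic (k : Type) [Field k] [IsAlgClosed k]
    (p : Fin 2 → ℕ) (τ : Fin 2 → k) :
    Nonempty (piOne k (relIdeal k (squidRelations k 2 p τ)) SquidVertex.src ≃*
      Multiplicative ℤ) :=
  squid_t_eq_two_pi_one_infinite_cyclic_general k p τ
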